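/- For all holomorphic tangent fields U, V on M one has Tor_∇(U, V̄) = −g([U, V̄], T) · T, i.e. ∇_U V̄ − ∇_{V̄} U − [U, V̄] = −g([U,V̄], T) T. -/

import Mathlib

noncomputable section
open scoped BigOperators

/-- `ℂ^{n+1}`, identified with `ℝ^{2n+2}` via its real structure. -/
abbrev E (n : ℕ) : Type := EuclideanSpace ℂ (Fin (n + 1))

/-- The standard complex structure: multiplication by `i`. -/
def J {n : ℕ} (v : E n) : E n := Complex.I • v

/-- The real inner product `⟨x, y⟩ = Re ⟪x, y⟫`. -/
def rI {n : ℕ} (x y : E n) : ℝ := (inner ℂ x y : ℂ).re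

/-- The (real) tangent space at `p` of a hypersurface with unit normal `ν`. -/
def tangAt {n : ℕ} (ν : E n → E n) (p : E n) : Set (E n) := {X | rI (ν p) X = 0}

/-- `M` is a smooth embedded real hypersurface of `ℂ^{n+1}` (locally a regular zero
set of a smooth real function), oriented by the smooth unit normal field `ν`
(extended smoothly to the ambient space). -/
def IsHypersurface {n : ℕ} (M : Set (E n)) (ν : E n → E n) : Prop :=
  ContDiff ℝ (⊤ : ℕ∞) ν ∧ (∀ p ∈ M, ‖ν p‖ = 1) ∧
    ∀ p ∈ M, ∃ (V : Set (E n)) (F : E n → ℝ), IsOpen V ∧ p ∈ V ∧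
      ContDiffOn ℝ (⊤ : ℕ∞) F V ∧ (M ∩ V = {z ∈ V | F z = 0}) ∧
      ∀ z ∈ M ∩ V, ∀ X : E n, (fderiv ℝ F z X = 0 ↔ X ∈ tangAt ν z)

/-- The horizontal (maximal complex) subspace `H_p = {X ∈ T_pM : JX ∈ T_pM}`. -/
def horizAt {n : ℕ} (ν : E n → E n) (p : E n) : Set (E n) :=
  {X | X ∈ tangAt ν p ∧ J X ∈ tangAt ν p}

/-- The second fundamental form `h(X,Y) = ⟨X, ∂_Y ν⟩`. -/
def sff {n : ℕ} (ν : E n → E n) (p : E n) (X Y : E n) : ℝ :=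
  rI X (fderiv ℝ ν p Y)

/-- The family `X_1, …, X_n, J X_1, …, J X_n`. -/
def combined {n : ℕ} (X : Fin n → E n) : (Fin n ⊕ Fin n) → E n :=
  Sum.elim X (fun α => J (X α))

/-- `{X_1, …, X_n, J X_1, …, J X_n}` is an orthonormal basis of the horizontal
space at `p` (w.r.t. the real inner product). -/
def IsHorizONB {n : ℕ} (ν : E n → E n) (p : E n) (X : Fin n → E n) : Prop :=
  (∀ α, X α ∈ horizAt ν p) ∧
  (∀ i j, rI (combined X i) (combined X j) = if i = j then 1 else 0) ∧
  (∀ Y ∈ horizAt ν p, Y ∈ Submodule.span ℝ (Set.range (combined X)))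

/-! ## Complexified tangent vectors
A complexified vector `X + iY` (the complexification unit `i` is distinct from
the complex structure `J`) is modelled as the pair `(X, Y)`. -/

/-- Complexified vectors of `ℂ^{n+1}`: `(X, Y)` stands for `X + iY`. -/
abbrev CV (n : ℕ) : Type := E n × E n

/-- Conjugation `X + iY ↦ X - iY`. -/
def conjCV {n : ℕ} (v : CV n) : CV n := (v.1, -v.2)

/-- Multiplication of a complexified vector by a complex scalar. -/
def csmul {n : ℕ} (c : ℂ) (v : CV n) : CV n :=
  (c.re • v.1 - c.im • v.2, c.re • v.2 + c.im • v.1)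

/-- `g`, the complex-bilinear extension of the real inner product. -/
def gC {n : ℕ} (v w : CV n) : ℂ :=
  ((rI v.1 w.1 - rI v.2 w.2 : ℝ) : ℂ) + ((rI v.1 w.2 + rI v.2 w.1 : ℝ) : ℂ) * Complex.I

/-- The flat connection `D` of `ℂ^{n+1}` (componentwise directional derivative),
complex-bilinearly extended: `DD V u p = D_u V (p)`. -/
def DD {n : ℕ} (V : E n → CV n) (u : CV n) (p : E n) : CV n :=
  (fderiv ℝ (fun z => (V z).1) p u.1 - fderiv ℝ (fun z => (V z).2) p u.2,
   fderiv ℝ (fun z => (V z).1) p u.2 + fderiv ℝ (fun z => (V z).2) p u.1)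

/-- The Lie bracket `[U,V]` of complexified fields (for the flat ambient space
it is `D_U V - D_V U`). -/
def bracket {n : ℕ} (U V : E n → CV n) (p : E n) : CV n :=
  DD V (U p) p - DD U (V p) p

/-- Derivative `U f` of a complex function along a complexified vector. -/
def dC {n : ℕ} (f : E n → ℂ) (u : CV n) (p : E n) : ℂ :=
  (fderiv ℝ f p u.1) + Complex.I * (fderiv ℝ f p u.2)

/-- The field `T = J(ν)`, viewed as a complexified field. -/
def TF {n : ℕ} (ν : E n → E n) (z : E n) : CV n := (J (ν z), 0)

/-- The holomorphic unit normal `N = (ν - iT)/√2`. -/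
def NF {n : ℕ} (ν : E n → E n) (z : E n) : CV n :=
  ((Real.sqrt 2)⁻¹ • ν z, -((Real.sqrt 2)⁻¹ • J (ν z)))

/-- The complex-bilinear extension of the second fundamental form:
`h(Z, W) = g(Z, D_W ν)`. -/
def hC {n : ℕ} (ν : E n → E n) (p : E n) (v w : CV n) : ℂ :=
  gC v (fderiv ℝ ν p w.1, fderiv ℝ ν p w.2)

/-- Conjugate of a complexified field. -/
def conjF {n : ℕ} (V : E n → CV n) : E n → CV n := fun z => conjCV (V z)

/-- A holomorphic tangent field `Z = X - iJX`, with `X` a smooth real field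
satisfying `⟪X, ν⟫ = 0` (hermitian orthogonality) at every point of `M`. -/
def IsHoloField {n : ℕ} (M : Set (E n)) (ν : E n → E n) (Z : E n → CV n) : Prop :=
  ContDiff ℝ (⊤ : ℕ∞) (fun z => (Z z).1) ∧
  (∀ z, (Z z).2 = -J ((Z z).1)) ∧
  ∀ p ∈ M, (inner ℂ (ν p) ((Z p).1) : ℂ) = 0

/-- A complexified tangent field: a smooth field whose value at every point of
`M` lies in the complexified tangent space `ℂ T_p M`. -/
def IsCTField {n : ℕ} (M : Set (E n)) (ν : E n → E n) (V : E n → CV n) : Prop :=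
  ContDiff ℝ (⊤ : ℕ∞) (fun z => (V z).1) ∧ ContDiff ℝ (⊤ : ℕ∞) (fun z => (V z).2) ∧
  ∀ p ∈ M, rI (ν p) ((V p).1) = 0 ∧ rI (ν p) ((V p).2) = 0

/-- Projection of a real vector onto the real horizontal space (orthogonal
complement of `ν` and `T = Jν`). -/
def horR {n : ℕ} (ν : E n → E n) (z : E n) (x : E n) : E n :=
  x - rI (ν z) x • ν z - rI (J (ν z)) x • J (ν z)

/-- Projection `Π_H` of a complexified tangent vector onto the holomorphic bundle. -/
def PiH {n : ℕ} (ν : E n → E n) (z : E n) (v : CV n) : CV n :=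
  ((2 : ℝ)⁻¹ • (horR ν z v.1 + J (horR ν z v.2)),
   (2 : ℝ)⁻¹ • (horR ν z v.2 - J (horR ν z v.1)))

/-- Projection `Π_H̄` onto the antiholomorphic bundle. -/
def PiHb {n : ℕ} (ν : E n → E n) (z : E n) (v : CV n) : CV n :=
  ((2 : ℝ)⁻¹ • (horR ν z v.1 - J (horR ν z v.2)),
   (2 : ℝ)⁻¹ • (horR ν z v.2 + J (horR ν z v.1)))

/-- The connection `∇`: writing `V = Z + W̄ + fT` with `Z = Π_H V` holomorphic,
`W̄ = Π_H̄ V` antiholomorphic and `f = g(V, T)`, one sets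
`∇_u V = D_u Z - g(D_u Z, N̄) N + D_u W̄ - g(D_u W̄, N) N̄ + (u f) T`. -/
def nabla {n : ℕ} (ν : E n → E n) (V : E n → CV n) (u : CV n) (p : E n) : CV n :=
  (DD (fun z => PiH ν z (V z)) u p
      - csmul (gC (DD (fun z => PiH ν z (V z)) u p) (conjCV (NF ν p))) (NF ν p))
  + (DD (fun z => PiHb ν z (V z)) u p
      - csmul (gC (DD (fun z => PiHb ν z (V z)) u p) (NF ν p)) (conjCV (NF ν p)))
  + csmul (dC (fun z => gC (V z) (TF ν z)) u p) (TF ν p)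

/-- The torsion `Tor_∇(U,V) = ∇_U V - ∇_V U - [U,V]`. -/
def Tor {n : ℕ} (ν : E n → E n) (U V : E n → CV n) (p : E n) : CV n :=
  nabla ν V (U p) p - nabla ν U (V p) p - bracket U V p

/-- The covariant derivative of the second fundamental form:
`∇_Z h (U, W) = Z h(U,W) - h(∇_Z U, W) - h(U, ∇_Z W)`. -/
def nablaHform {n : ℕ} (ν : E n → E n) (Zf U W : E n → CV n) (p : E n) : ℂ :=
  dC (fun z => hC ν z (U z) (W z)) (Zf p) p
    - hC ν p (nabla ν U (Zf p) p) (W p) - hC ν p (U p) (nabla ν W (Zf p) p)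


/-!
Write `U = X - iJX` and `V̄ = Y + iJY` with `X`, `Y` horizontal along `M`. There
`Π_H U = U`, `Π_H̄ V̄ = V̄`, `Π_H̄ U = Π_H V̄ = 0` and `g(U, T) = g(V̄, T) = 0`; since derivatives
in tangent directions only see values on `M`, this gives `∇_U V̄ = D_U V̄ - g(D_U V̄, N) N̄` and
`∇_V̄ U = D_V̄ U - g(D_V̄ U, N̄) N`. Hence `Tor(U, V̄) = g(D_V̄ U, N̄) N - g(D_U V̄, N) N̄`, a
multiple of `N - N̄ = -√2 i T` once `g(D_U V̄, N) = g(D_V̄ U, N̄)`. Differentiating `⟪ν, Y⟫ = 0`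
along `M` expresses the `ν`- and `T`-components of the real part of `D_U V̄` through the second
fundamental form `h` as `-(h(X, Y) + h(JX, JY))` and `h(X, JY) - h(JX, Y)`, so the equality is
the symmetry of `h`; the factor is then read off from `g([U, V̄], T)`.

Tangent derivatives are computed along curves in `M` given by the implicit function theorem,
and `h` is symmetric on `TM` because there it is `dF(ν)⁻¹` times the Hessian of a local
defining function `F`.
-/

open Filter Topology

section ComplexStructure

variable {n : ℕ}

@[simp] lemma J_J (x : E n) : J (J x) = -x := by
  simp [J, smul_smul]

@[simp] lemma J_add (x y : E n) : J (x + y) = J x + J y := smul_add _ _ _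
@[simp] lemma J_sub (x y : E n) : J (x - y) = J x - J y := smul_sub _ _ _
@[simp] lemma J_neg (x : E n) : J (-x) = -J x := smul_neg _ _
@[simp] lemma J_smul (c : ℝ) (x : E n) : J (c • x) = c • J x := smul_comm _ _ _

lemma rI_comm (x y : E n) : rI x y = rI y x := by
  rw [rI, rI, ← inner_conj_symm, Complex.conj_re]

@[simp] lemma rI_add_right (x y z : E n) : rI x (y + z) = rI x y + rI x z := by simp [rI]
@[simp] lemma rI_sub_left (x y z : E n) : rI (x - y) z = rI x z - rI y z := by simp [rI]
@[simp] lemma rI_sub_right (x y z : E n) : rI x (y - z) = rI x y - rI x z := by simp [rI]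
@[simp] lemma rI_neg_left (x y : E n) : rI (-x) y = -rI x y := by simp [rI]
@[simp] lemma rI_neg_right (x y : E n) : rI x (-y) = -rI x y := by simp [rI]
@[simp] lemma rI_zero_left (y : E n) : rI 0 y = 0 := by simp [rI]
@[simp] lemma rI_zero_right (x : E n) : rI x 0 = 0 := by simp [rI]

@[simp] lemma rI_smul_right (c : ℝ) (x y : E n) : rI x (c • y) = c * rI x y := by
  simp [rI, ← Complex.coe_smul]

@[simp] lemma rI_J_J (x y : E n) : rI (J x) (J y) = rI x y := by
  simp [rI, J, ← mul_assoc]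

lemma rI_J_left (x y : E n) : rI (J x) y = -rI x (J y) := by
  simp [rI, J]

lemma rI_J_right (x y : E n) : rI x (J y) = -rI (J x) y := by
  rw [rI_J_left, neg_neg]

lemma rI_self_eq_one {x : E n} (hx : ‖x‖ = 1) : rI x x = 1 := by
  simp [rI, inner_self_eq_norm_sq_to_K, hx]

lemma mem_tangAt {ν : E n → E n} {z x : E n} : x ∈ tangAt ν z ↔ rI (ν z) x = 0 := Iff.rfl

lemma mem_horizAt {ν : E n → E n} {z x : E n} :
    x ∈ horizAt ν z ↔ rI (ν z) x = 0 ∧ rI (ν z) (J x) = 0 := Iff.rfl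

end ComplexStructure

def holoVec {n : ℕ} (w : E n) : CV n := (w, -J w)

def antiholoVec {n : ℕ} (w : E n) : CV n := (w, J w)

section Pointwise

variable {n : ℕ} (ν : E n → E n) (z : E n)

lemma mem_horizAt_of_inner_eq_zero {y : E n} (hy : (inner ℂ (ν z) y : ℂ) = 0) :
    y ∈ horizAt ν z := by
  simp [mem_horizAt, rI, J, hy]

lemma horR_eq_self {y : E n} (hy : y ∈ horizAt ν z) : horR ν z y = y := by
  rw [mem_horizAt] at hy
  simp [horR, rI_J_left, hy]

lemma horR_J (x : E n) : horR ν z (J x) = J (horR ν z x) := by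
  simp only [horR, rI_J_left (ν z), J_J, rI_neg_right, J_sub, J_smul]
  module

lemma horR_neg (x : E n) : horR ν z (-x) = -horR ν z x := by
  simp only [horR, rI_neg_right]
  module

lemma PiH_antiholoVec (y : E n) : PiH ν z (antiholoVec y) = 0 := by
  simp [PiH, antiholoVec, horR_J]

lemma PiHb_antiholoVec (y : E n) : PiHb ν z (antiholoVec y) = antiholoVec (horR ν z y) := by
  ext1 <;> simp only [PiHb, antiholoVec, horR_J, J_J] <;> module

lemma PiH_holoVec (x : E n) : PiH ν z (holoVec x) = holoVec (horR ν z x) := by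
  ext1 <;> simp only [PiH, holoVec, horR_neg, horR_J, J_neg, J_J] <;> module

lemma PiHb_holoVec (x : E n) : PiHb ν z (holoVec x) = 0 := by
  ext1 <;> simp only [PiHb, holoVec, horR_neg, horR_J, J_neg, J_J, Prod.fst_zero,
    Prod.snd_zero] <;> module

lemma gC_antiholoVec_TF {y : E n} (hy : y ∈ horizAt ν z) : gC (antiholoVec y) (TF ν z) = 0 := by
  rw [mem_horizAt] at hy
  simp [gC, antiholoVec, TF, rI_comm y, rI_J_left, hy]

lemma gC_holoVec_TF {x : E n} (hx : x ∈ horizAt ν z) : gC (holoVec x) (TF ν z) = 0 := by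
  rw [mem_horizAt] at hx
  simp [gC, holoVec, TF, rI_comm x, rI_J_left, hx]

@[simp] lemma gC_zero_left (w : CV n) : gC 0 w = 0 := by
  simp [gC]

@[simp] lemma csmul_zero_left (v : CV n) : csmul 0 v = 0 := by
  simp [csmul]

lemma csmul_gC_antiholoVec_NF (a : E n) :
    csmul (gC (antiholoVec a) (NF ν z)) (conjCV (NF ν z)) = antiholoVec (a - horR ν z a) := by
  ext1 <;> simp only [csmul, gC, antiholoVec, NF, conjCV, horR, Complex.add_re, Complex.add_im,
    Complex.mul_re, Complex.mul_im, Complex.ofReal_re, Complex.ofReal_im, Complex.I_re,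
    Complex.I_im, rI_smul_right, rI_neg_right, rI_J_left a, J_sub, J_neg, J_smul, J_J, neg_neg,
    rI_comm (ν z) a, rI_comm (J (ν z)) a] <;>
    match_scalars <;> ring_nf <;> rw [inv_pow, Real.sq_sqrt zero_le_two] <;> ring

lemma csmul_gC_holoVec_conjCV_NF (b : E n) :
    csmul (gC (holoVec b) (conjCV (NF ν z))) (NF ν z) = holoVec (b - horR ν z b) := by
  ext1 <;> simp only [csmul, gC, holoVec, NF, conjCV, horR, Complex.add_re, Complex.add_im,
    Complex.mul_re, Complex.mul_im, Complex.ofReal_re, Complex.ofReal_im, Complex.I_re,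
    Complex.I_im, rI_smul_right, rI_neg_left, rI_neg_right, rI_J_left b, J_sub, J_smul, J_J,
    neg_neg, rI_comm (ν z) b, rI_comm (J (ν z)) b] <;>
    match_scalars <;> ring_nf <;> rw [inv_pow, Real.sq_sqrt zero_le_two] <;> ring

lemma eq_csmul_TF_of_rI_eq {a b : E n} (hν : rI (ν z) a = rI (ν z) b)
    (hT : rI (J (ν z)) a = -rI (J (ν z)) b) :
    antiholoVec a - csmul (gC (antiholoVec a) (NF ν z)) (conjCV (NF ν z))
        - (holoVec b - csmul (gC (holoVec b) (conjCV (NF ν z))) (NF ν z))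
        - (antiholoVec a - holoVec b)
      = csmul (-gC (antiholoVec a - holoVec b) (TF ν z)) (TF ν z) := by
  rw [csmul_gC_antiholoVec_NF, csmul_gC_holoVec_conjCV_NF]
  ext1 <;> simp only [csmul, gC, holoVec, antiholoVec, TF, horR, Complex.add_re, Complex.add_im,
    Complex.neg_re, Complex.neg_im, Complex.mul_re, Complex.mul_im, Complex.ofReal_re,
    Complex.ofReal_im, Complex.I_re, Complex.I_im, Prod.fst_sub, Prod.snd_sub, rI_sub_left,
    rI_neg_left, rI_neg_right, rI_zero_right, rI_J_left a, rI_J_left b, J_sub, J_smul, J_J,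
    rI_comm (ν z) a, rI_comm (J (ν z)) a, rI_comm (ν z) b, rI_comm (J (ν z)) b] at * <;>
    rw [hν, hT] <;> module

end Pointwise

/-- Twice the `∂̄`-part of `df_p`, evaluated at `w`. -/
def dbar {n : ℕ} (f : E n → E n) (p w : E n) : E n := fderiv ℝ f p w + J (fderiv ℝ f p (J w))

section Calculus

variable {n : ℕ} {p : E n}

@[fun_prop]
lemma differentiableAt_J {f : E n → E n} (hf : DifferentiableAt ℝ f p) :
    DifferentiableAt ℝ (fun z => J (f z)) p :=
  hf.const_smul Complex.I

@[fun_prop]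
lemma differentiableAt_rI {f g : E n → E n} (hf : DifferentiableAt ℝ f p)
    (hg : DifferentiableAt ℝ g p) : DifferentiableAt ℝ (fun z => rI (f z) (g z)) p :=
  Complex.reCLM.differentiableAt.comp p (hf.inner ℂ hg)

lemma fderiv_J_apply {f : E n → E n} (hf : DifferentiableAt ℝ f p) (w : E n) :
    fderiv ℝ (fun z => J (f z)) p w = J (fderiv ℝ f p w) := by
  simp only [J, fderiv_fun_const_smul hf, smul_apply]

lemma fderiv_rI_apply {f g : E n → E n} (hf : DifferentiableAt ℝ f p)
    (hg : DifferentiableAt ℝ g p) (w : E n) :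
    fderiv ℝ (fun z => rI (f z) (g z)) p w
      = rI (f p) (fderiv ℝ g p w) + rI (fderiv ℝ f p w) (g p) := by
  have h := Complex.reCLM.hasFDerivAt.comp p (hf.hasFDerivAt.inner ℂ hg.hasFDerivAt)
  rw [show (fun z => rI (f z) (g z)) = Complex.reCLM ∘ fun z => inner ℂ (f z) (g z) from rfl,
    h.fderiv]
  simp [rI]

lemma DD_zero (u : CV n) : DD (fun _ => 0) u p = 0 := by
  simp [DD]

lemma DD_antiholoVec {Y : E n → E n} (hY : DifferentiableAt ℝ Y p) (u : CV n) :
    DD (fun z => antiholoVec (Y z)) u p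
      = antiholoVec (fderiv ℝ Y p u.1 - J (fderiv ℝ Y p u.2)) := by
  ext1 <;> simp only [DD, antiholoVec, fderiv_J_apply hY, J_sub, J_J]
  abel

lemma DD_holoVec {X : E n → E n} (hX : DifferentiableAt ℝ X p) (u : CV n) :
    DD (fun z => holoVec (X z)) u p
      = holoVec (fderiv ℝ X p u.1 + J (fderiv ℝ X p u.2)) := by
  ext1 <;> simp only [DD, holoVec, fderiv_fun_neg, neg_apply, fderiv_J_apply hX, J_add, J_J] <;>
    abel

lemma DD_antiholoVec_holoVec {Y : E n → E n} (hY : DifferentiableAt ℝ Y p) (x : E n) :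
    DD (fun z => antiholoVec (Y z)) (holoVec x) p = antiholoVec (dbar Y p x) := by
  simp [DD_antiholoVec hY, holoVec, dbar]

lemma DD_holoVec_antiholoVec {X : E n → E n} (hX : DifferentiableAt ℝ X p) (y : E n) :
    DD (fun z => holoVec (X z)) (antiholoVec y) p = holoVec (dbar X p y) := by
  simp [DD_holoVec hX, antiholoVec, dbar]

end Calculus

section Hypersurface

variable {n : ℕ} {M : Set (E n)} {ν : E n → E n} {p : E n}

lemma fderiv_apply_normal_ne_zero {F : E n → ℝ}
    (htang : ∀ X, fderiv ℝ F p X = 0 ↔ X ∈ tangAt ν p) (hunit : ‖ν p‖ = 1) :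
    fderiv ℝ F p (ν p) ≠ 0 := fun h => by
  simpa [mem_tangAt, rI_self_eq_one hunit] using (htang (ν p)).1 h

lemma IsHypersurface.exists_curve (hM : IsHypersurface M ν) (hp : p ∈ M) {X : E n}
    (hX : X ∈ tangAt ν p) :
    ∃ c : ℝ → E n, c 0 = p ∧ HasDerivAt c X 0 ∧ ∀ᶠ t in 𝓝 0, c t ∈ M := by
  obtain ⟨-, hunit, hloc⟩ := hM
  obtain ⟨V, F, hV, hpV, hF, hMV, htang⟩ := hloc p hp
  have hpMV : p ∈ M ∩ V := ⟨hp, hpV⟩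
  have hFp : F p = 0 := (hMV ▸ hpMV).2
  have hFs : HasStrictFDerivAt F (fderiv ℝ F p) p :=
    (hF.contDiffAt (hV.mem_nhds hpV)).hasStrictFDerivAt (by simp)
  have hsurj : (fderiv ℝ F p : E n →ₗ[ℝ] ℝ).range = ⊤ :=
    Module.Dual.range_eq_top_of_ne_zero fun h =>
      fderiv_apply_normal_ne_zero (htang p hpMV) (hunit p hp)
        (by simp [← ContinuousLinearMap.coe_coe, h])
  let ξ : (fderiv ℝ F p : E n →ₗ[ℝ] ℝ).ker := ⟨X, (htang p hpMV X).2 hX⟩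
  let c : ℝ → E n := fun t => hFs.implicitFunction F _ hsurj (F p) (t • ξ)
  have hline : HasDerivAt (fun t : ℝ => t • ξ) ξ 0 := by
    simpa using (hasDerivAt_id (0 : ℝ)).smul_const ξ
  have hc : HasDerivAt c X 0 := by
    have h := (hFs.to_implicitFunction hsurj).hasFDerivAt
    rw [← zero_smul ℝ ξ] at h
    exact h.comp_hasDerivAt 0 hline
  have hc0 : c 0 = p := by simp [c]
  refine ⟨c, hc0, hc, ?_⟩
  have hlevel : ∀ᶠ t in 𝓝 (0 : ℝ), F (c t) = F p := by
    refine (tendsto_const_nhds.prodMk_nhds ?_).eventually (hFs.map_implicitFunction_eq hsurj)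
    simpa using hline.continuousAt.tendsto
  have hmemV : ∀ᶠ t in 𝓝 (0 : ℝ), c t ∈ V :=
    hc.continuousAt.eventually_mem (hc0 ▸ hV.mem_nhds hpV)
  filter_upwards [hlevel, hmemV] with t hFt hVt
  exact (hMV.symm ▸ ⟨hVt, hFt.trans hFp⟩ : c t ∈ M ∩ V).1

lemma IsHypersurface.fderiv_apply_eq {G : Type*} [NormedAddCommGroup G] [NormedSpace ℝ G]
    (hM : IsHypersurface M ν) (hp : p ∈ M) {f g : E n → G} (hf : DifferentiableAt ℝ f p)
    (hg : DifferentiableAt ℝ g p) (hfg : f =ᶠ[𝓝[M] p] g) {w : E n} (hw : w ∈ tangAt ν p) :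
    fderiv ℝ f p w = fderiv ℝ g p w := by
  obtain ⟨c, rfl, hc, hcM⟩ := hM.exists_curve hp hw
  have hcM' : Tendsto c (𝓝 0) (𝓝[M] (c 0)) :=
    tendsto_nhdsWithin_iff.2 ⟨hc.continuousAt.tendsto, hcM⟩
  exact (hf.hasFDerivAt.comp_hasDerivAt 0 hc).unique
    ((hg.hasFDerivAt.comp_hasDerivAt 0 hc).congr_of_eventuallyEq (hcM'.eventually hfg))

lemma IsHypersurface.sff_symm (hM : IsHypersurface M ν) (hp : p ∈ M) {a b : E n}
    (ha : a ∈ tangAt ν p) (hb : b ∈ tangAt ν p) : sff ν p a b = sff ν p b a := by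
  obtain ⟨V, F, hV, hpV, hF, -, htang⟩ := hM.2.2 p hp
  have hν : Differentiable ℝ ν := hM.1.differentiable (by simp)
  have hFp : ContDiffAt ℝ (⊤ : ℕ∞) F p := hF.contDiffAt (hV.mem_nhds hpV)
  have hF'' : DifferentiableAt ℝ (fderiv ℝ F) p :=
    (hFp.fderiv_right (m := 1) (WithTop.coe_le_coe.2 le_top)).differentiableAt one_ne_zero
  set lam : E n → ℝ := fun z => fderiv ℝ F z (ν z)
  have hlam : DifferentiableAt ℝ lam p := hF''.clm_apply (hν p)
  -- On `M ∩ V` the kernel of `dF` is the tangent space, so `dF(w) = ⟨ν, w⟩ dF(ν)`.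
  have hdF : ∀ w, (fun z => rI (ν z) w * lam z) =ᶠ[𝓝[M] p] fun z => fderiv ℝ F z w := by
    intro w
    refine eventually_nhdsWithin_iff.2 ((hV.eventually_mem hpV).mono fun z hzV hzM => ?_)
    have hproj : w - rI (ν z) w • ν z ∈ tangAt ν z := by
      simp [mem_tangAt, rI_self_eq_one (hM.2.1 z hzM)]
    have h := (htang z ⟨hzM, hzV⟩ _).2 hproj
    rw [map_sub, map_smul, smul_eq_mul, sub_eq_zero] at h
    exact h.symm
  have hsecond : ∀ d w, d ∈ tangAt ν p → w ∈ tangAt ν p →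
      lam p * rI (fderiv ℝ ν p d) w = fderiv ℝ (fderiv ℝ F) p d w := by
    intro d w hd hw
    have hνw := differentiableAt_rI (hν p) (differentiableAt_const w)
    have h := hM.fderiv_apply_eq hp (hνw.fun_mul hlam)
      (hF''.clm_apply (differentiableAt_const w)) (hdF w) hd
    rw [fderiv_fun_mul hνw hlam, fderiv_clm_apply hF'' (differentiableAt_const w)] at h
    simpa [fderiv_rI_apply (hν p) (differentiableAt_const w), mem_tangAt.1 hw] using h
  have hlam0 : lam p ≠ 0 := fderiv_apply_normal_ne_zero (htang p ⟨hp, hpV⟩) (hM.2.1 p hp)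
  have hsymm : fderiv ℝ (fderiv ℝ F) p a b = fderiv ℝ (fderiv ℝ F) p b a :=
    hFp.isSymmSndFDerivAt
      (by rw [minSmoothness_of_isRCLikeNormedField]; exact WithTop.coe_le_coe.2 le_top) a b
  simp only [sff, rI_comm a, rI_comm b]
  exact mul_left_cancel₀ hlam0 (by rw [hsecond b a hb ha, hsecond a b ha hb, hsymm])

lemma IsHypersurface.inner_fderiv_of_inner_eq_zero (hM : IsHypersurface M ν) (hp : p ∈ M)
    {Y : E n → E n} (hY : DifferentiableAt ℝ Y p)
    (hYM : ∀ z ∈ M, (inner ℂ (ν z) (Y z) : ℂ) = 0) {w : E n} (hw : w ∈ tangAt ν p) :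
    (inner ℂ (ν p) (fderiv ℝ Y p w) : ℂ) = -inner ℂ (fderiv ℝ ν p w) (Y p) := by
  have hν : DifferentiableAt ℝ ν p := hM.1.differentiable (by simp) p
  have h := hM.fderiv_apply_eq hp (hν.inner ℂ hY) (differentiableAt_const 0)
    (eventually_nhdsWithin_of_forall hYM) hw
  simpa [fderiv_inner_apply ℂ hν hY, eq_neg_iff_add_eq_zero] using h

lemma IsHypersurface.rI_fderiv_of_inner_eq_zero (hM : IsHypersurface M ν) (hp : p ∈ M)
    {Y : E n → E n} (hY : DifferentiableAt ℝ Y p)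
    (hYM : ∀ z ∈ M, (inner ℂ (ν z) (Y z) : ℂ) = 0) {w : E n} (hw : w ∈ tangAt ν p) :
    rI (ν p) (fderiv ℝ Y p w) = -sff ν p (Y p) w ∧
      rI (J (ν p)) (fderiv ℝ Y p w) = sff ν p (J (Y p)) w := by
  have h := hM.inner_fderiv_of_inner_eq_zero hp hY hYM hw
  rw [sff, sff, rI, rI, rI, rI, J, J, inner_smul_left, inner_smul_left, h]
  have hre := inner_re_symm (𝕜 := ℂ) (fderiv ℝ ν p w) (Y p)
  have him := inner_im_symm (𝕜 := ℂ) (fderiv ℝ ν p w) (Y p)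
  simp only [RCLike.re_to_complex, RCLike.im_to_complex] at hre him
  simp [hre, him]

lemma IsHypersurface.rI_dbar (hM : IsHypersurface M ν) (hp : p ∈ M) {Y : E n → E n}
    (hY : DifferentiableAt ℝ Y p) (hYM : ∀ z ∈ M, (inner ℂ (ν z) (Y z) : ℂ) = 0) {x : E n}
    (hx : x ∈ horizAt ν p) :
    rI (ν p) (dbar Y p x) = -(sff ν p (Y p) x + sff ν p (J (Y p)) (J x)) ∧
      rI (J (ν p)) (dbar Y p x) = sff ν p (J (Y p)) x - sff ν p (Y p) (J x) := by
  obtain ⟨h₁, h₂⟩ := hM.rI_fderiv_of_inner_eq_zero hp hY hYM hx.1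
  obtain ⟨h₃, h₄⟩ := hM.rI_fderiv_of_inner_eq_zero hp hY hYM hx.2
  rw [dbar, rI_add_right, rI_add_right, rI_J_J, rI_J_right, h₁, h₂, h₃, h₄]
  constructor <;> ring

lemma IsHypersurface.rI_dbar_swap (hM : IsHypersurface M ν) (hp : p ∈ M) {X Y : E n → E n}
    (hX : DifferentiableAt ℝ X p) (hXM : ∀ z ∈ M, (inner ℂ (ν z) (X z) : ℂ) = 0)
    (hY : DifferentiableAt ℝ Y p) (hYM : ∀ z ∈ M, (inner ℂ (ν z) (Y z) : ℂ) = 0) :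
    rI (ν p) (dbar Y p (X p)) = rI (ν p) (dbar X p (Y p)) ∧
      rI (J (ν p)) (dbar Y p (X p)) = -rI (J (ν p)) (dbar X p (Y p)) := by
  have hx := mem_horizAt_of_inner_eq_zero ν p (hXM p hp)
  have hy := mem_horizAt_of_inner_eq_zero ν p (hYM p hp)
  obtain ⟨a₁, a₂⟩ := hM.rI_dbar hp hY hYM hx
  obtain ⟨b₁, b₂⟩ := hM.rI_dbar hp hX hXM hy
  rw [a₁, a₂, b₁, b₂, hM.sff_symm hp hy.1 hx.1, hM.sff_symm hp hy.2 hx.2,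
    hM.sff_symm hp hy.2 hx.1, hM.sff_symm hp hy.1 hx.2]
  constructor <;> ring

end Hypersurface

section Connection

variable {n : ℕ} {M : Set (E n)} {ν : E n → E n} {p : E n}

lemma IsHypersurface.fderiv_horR_apply (hM : IsHypersurface M ν) (hp : p ∈ M) {Y : E n → E n}
    (hY : DifferentiableAt ℝ Y p) (hYM : ∀ z ∈ M, (inner ℂ (ν z) (Y z) : ℂ) = 0) {w : E n}
    (hw : w ∈ tangAt ν p) : fderiv ℝ (fun z => horR ν z (Y z)) p w = fderiv ℝ Y p w := by
  have hν : DifferentiableAt ℝ ν p := hM.1.differentiable (by simp) p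
  refine hM.fderiv_apply_eq hp (by unfold horR; fun_prop) hY ?_ hw
  exact eventually_nhdsWithin_of_forall fun z hz =>
    horR_eq_self ν z (mem_horizAt_of_inner_eq_zero ν z (hYM z hz))

lemma IsHypersurface.dC_eq_zero (hM : IsHypersurface M ν) (hp : p ∈ M) {f : E n → ℂ}
    (hf : DifferentiableAt ℝ f p) (hfM : ∀ z ∈ M, f z = 0) {u : CV n} (hu₁ : u.1 ∈ tangAt ν p)
    (hu₂ : u.2 ∈ tangAt ν p) : dC f u p = 0 := by
  have hf0 : f =ᶠ[𝓝[M] p] fun _ => 0 := eventually_nhdsWithin_of_forall hfM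
  rw [dC, hM.fderiv_apply_eq hp hf (differentiableAt_const 0) hf0 hu₁,
    hM.fderiv_apply_eq hp hf (differentiableAt_const 0) hf0 hu₂]
  simp

lemma IsHypersurface.nabla_antiholoVec (hM : IsHypersurface M ν) (hp : p ∈ M) {Y : E n → E n}
    (hY : DifferentiableAt ℝ Y p) (hYM : ∀ z ∈ M, (inner ℂ (ν z) (Y z) : ℂ) = 0) {u : CV n}
    (hu₁ : u.1 ∈ tangAt ν p) (hu₂ : u.2 ∈ tangAt ν p) :
    nabla ν (fun z => antiholoVec (Y z)) u p
      = DD (fun z => antiholoVec (Y z)) u p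
        - csmul (gC (DD (fun z => antiholoVec (Y z)) u p) (NF ν p)) (conjCV (NF ν p)) := by
  have hν : DifferentiableAt ℝ ν p := hM.1.differentiable (by simp) p
  have hhor : DifferentiableAt ℝ (fun z => horR ν z (Y z)) p := by unfold horR; fun_prop
  have hT : dC (fun z => gC (antiholoVec (Y z)) (TF ν z)) u p = 0 :=
    hM.dC_eq_zero hp (by unfold gC antiholoVec TF; fun_prop)
      (fun z hz => gC_antiholoVec_TF ν z (mem_horizAt_of_inner_eq_zero ν z (hYM z hz))) hu₁ hu₂
  simp only [nabla, PiH_antiholoVec, PiHb_antiholoVec, DD_zero, DD_antiholoVec hhor,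
    DD_antiholoVec hY, hM.fderiv_horR_apply hp hY hYM hu₁, hM.fderiv_horR_apply hp hY hYM hu₂,
    hT, gC_zero_left, csmul_zero_left, sub_zero, zero_add, add_zero]

lemma IsHypersurface.nabla_holoVec (hM : IsHypersurface M ν) (hp : p ∈ M) {X : E n → E n}
    (hX : DifferentiableAt ℝ X p) (hXM : ∀ z ∈ M, (inner ℂ (ν z) (X z) : ℂ) = 0) {u : CV n}
    (hu₁ : u.1 ∈ tangAt ν p) (hu₂ : u.2 ∈ tangAt ν p) :
    nabla ν (fun z => holoVec (X z)) u p
      = DD (fun z => holoVec (X z)) u p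
        - csmul (gC (DD (fun z => holoVec (X z)) u p) (conjCV (NF ν p))) (NF ν p) := by
  have hν : DifferentiableAt ℝ ν p := hM.1.differentiable (by simp) p
  have hhor : DifferentiableAt ℝ (fun z => horR ν z (X z)) p := by unfold horR; fun_prop
  have hT : dC (fun z => gC (holoVec (X z)) (TF ν z)) u p = 0 :=
    hM.dC_eq_zero hp (by unfold gC holoVec TF; fun_prop)
      (fun z hz => gC_holoVec_TF ν z (mem_horizAt_of_inner_eq_zero ν z (hXM z hz))) hu₁ hu₂
  simp only [nabla, PiH_holoVec, PiHb_holoVec, DD_zero, DD_holoVec hhor, DD_holoVec hX,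
    hM.fderiv_horR_apply hp hX hXM hu₁, hM.fderiv_horR_apply hp hX hXM hu₂, hT, gC_zero_left,
    csmul_zero_left, sub_zero, add_zero]

end Connection

theorem stmt9 {n : ℕ} (M : Set (E n)) (ν : E n → E n)
    (hsurf : IsHypersurface M ν)
    (U V : E n → CV n) (hU : IsHoloField M ν U) (hV : IsHoloField M ν V) :
    ∀ p ∈ M, Tor ν U (conjF V) p = csmul (-(gC (bracket U (conjF V) p) (TF ν p))) (TF ν p) := by
  intro p hp
  obtain ⟨hXs, hUJ, hXM⟩ := hU
  obtain ⟨hYs, hVJ, hYM⟩ := hV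
  set X : E n → E n := fun z => (U z).1
  set Y : E n → E n := fun z => (V z).1
  have hU_eq : U = fun z => holoVec (X z) := funext fun z => Prod.ext rfl (hUJ z)
  have hV_eq : conjF V = fun z => antiholoVec (Y z) :=
    funext fun z => Prod.ext rfl (by simp [conjF, conjCV, antiholoVec, Y, hVJ z])
  have hX := hXs.differentiable (by simp) p
  have hY := hYs.differentiable (by simp) p
  have hx := mem_horizAt_of_inner_eq_zero ν p (hXM p hp)
  have hy := mem_horizAt_of_inner_eq_zero ν p (hYM p hp)
  rw [hU_eq, hV_eq, Tor, bracket,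
    hsurf.nabla_antiholoVec hp hY hYM (u := holoVec (X p)) hx.1
      (by simpa [holoVec, mem_tangAt] using hx.2),
    hsurf.nabla_holoVec hp hX hXM (u := antiholoVec (Y p)) hy.1 hy.2,
    DD_antiholoVec_holoVec hY, DD_holoVec_antiholoVec hX]
  obtain ⟨hν, hT⟩ := hsurf.rI_dbar_swap hp hX hXM hY hYM
  exact eq_csmul_TF_of_rI_eq ν p hν hT
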